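/- Same-sign equal-exponent sum (Lemma SE-S5): if x and y are nonzero precision-p binary floating-point numbers with the same sign and equal exponents e_x = e_y, then s := RNE(x + y) is nonzero with the same sign as x and exponent e_s = e_x + 1, and the rounding error e := (x + y) - s is either zero or a nonzero floating-point number with exponent e_e = e_x - (p - 1). -/

import Mathlib

/-- t is representable in precision-p binary floating-point arithmetic. -/
def FpRep (p : ℕ) (t : ℝ) : Prop :=
  ∃ (m g : ℤ), |m| < (2 : ℤ) ^ p ∧ t = (m : ℝ) * (2 : ℝ) ^ g

/-- x is a nonzero precision-p binary float with exponent e. -/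
def FpVal (p : ℕ) (e : ℤ) (x : ℝ) : Prop :=
  ∃ m : ℤ, (2 : ℤ) ^ (p - 1) ≤ |m| ∧ |m| < (2 : ℤ) ^ p ∧
    x = (m : ℝ) * (2 : ℝ) ^ (e - ((p : ℤ) - 1))

/-- R rounds to a nearest precision-p floating-point number. -/
def IsRNE (p : ℕ) (R : ℝ → ℝ) : Prop :=
  ∀ t : ℝ, FpRep p (R t) ∧ ∀ z : ℝ, FpRep p z → |t - R t| ≤ |t - z|

/-!
Write `u = 2 ^ (e_x - (p - 1))`, so that `x + y = M * u` with `2 ^ p ≤ |M| ≤ 2 ^ (p + 1) - 2`.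
The even multiples of `u` in this range are floats, so rounding moves `x + y` by at most `u`, and
not at all when `M` is even. Hence the rounded sum is again `n * u` with `|M - n| ≤ 1`, by parity
`2 ^ p ≤ |n| < 2 ^ (p + 1)`, and the error `(M - n) * u` is `0` or `±u`.
-/

theorem FpVal.one_le_prec {p : ℕ} {e : ℤ} {x : ℝ} (hx : FpVal p e x) : 1 ≤ p := by
  obtain ⟨m, hm₁, hm₂, -⟩ := hx
  by_contra! hp
  interval_cases p
  norm_num at hm₁ hm₂
  simp [hm₂] at hm₁

theorem FpRep.exists_eq_int_mul_zpow {p : ℕ} {s : ℝ} (hs : FpRep p s) (b : ℤ)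
    (h : 2 ^ p * 2 ^ b ≤ 2 * |s|) : ∃ n : ℤ, s = n * 2 ^ b := by
  obtain ⟨m, g, hm, rfl⟩ := hs
  have hbg : b ≤ g := by
    by_contra! hgb
    have hm' : (|m| : ℝ) < 2 ^ p := by exact_mod_cast hm
    have hg : (2 : ℝ) ^ g * 2 ≤ 2 ^ b := by
      rw [← zpow_add_one₀ two_ne_zero]
      exact zpow_le_zpow_right₀ one_le_two (by omega)
    rw [abs_mul, abs_of_pos (zpow_pos two_pos g : (0 : ℝ) < 2 ^ g)] at h
    linarith [mul_pos (sub_pos.2 hm') (zpow_pos two_pos g : (0 : ℝ) < 2 ^ g),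
      mul_le_mul_of_nonneg_left hg (pow_nonneg zero_le_two p : (0 : ℝ) ≤ 2 ^ p)]
  refine ⟨m * 2 ^ (g - b).toNat, ?_⟩
  rw [Int.cast_mul, Int.cast_pow, Int.cast_ofNat, mul_assoc, ← zpow_natCast,
    ← zpow_add₀ two_ne_zero, Int.toNat_of_nonneg (by omega), sub_add_cancel]

theorem exists_fpRep_abs_int_mul_zpow_sub_le {p : ℕ} {M : ℤ} (b : ℤ)
    (hM : |M| + 2 ≤ 2 * 2 ^ p) :
    ∃ z, FpRep p z ∧ |M * 2 ^ b - z| ≤ ((M % 2 : ℤ) : ℝ) * 2 ^ b := by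
  refine ⟨(M / 2 : ℤ) * 2 ^ (b + 1), ⟨M / 2, b + 1, ?_, rfl⟩, le_of_eq ?_⟩
  · have := le_abs_self M
    have := neg_abs_le M
    rw [abs_lt]
    constructor <;> omega
  · have hr : (M : ℝ) * 2 ^ b - (M / 2 : ℤ) * 2 ^ (b + 1) = ((M % 2 : ℤ) : ℝ) * 2 ^ b := by
      rw [zpow_add_one₀ two_ne_zero, Int.emod_def]; push_cast; ring
    rw [hr, abs_of_nonneg]
    exact mul_nonneg (Int.cast_nonneg (Int.emod_nonneg M two_ne_zero)) (zpow_nonneg zero_le_two b)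

theorem IsRNE.exists_int_mul_zpow_apply {p : ℕ} {R : ℝ → ℝ} (hR : IsRNE p R) {M : ℤ}
    (b : ℤ) (hM₁ : 2 ^ p ≤ |M|) (hM₂ : |M| + 2 ≤ 2 * 2 ^ p) :
    ∃ n : ℤ, R (M * 2 ^ b) = n * 2 ^ b ∧ |M - n| ≤ M % 2 := by
  obtain ⟨hs, hnear⟩ := hR (M * 2 ^ b)
  obtain ⟨z, hz, hzt⟩ := exists_fpRep_abs_int_mul_zpow_sub_le b hM₂
  have herr := (hnear z hz).trans hzt
  have hu : (0 : ℝ) < 2 ^ b := zpow_pos two_pos b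
  obtain ⟨n, hn⟩ := hs.exists_eq_int_mul_zpow b <| by
    have hMP : (2 : ℤ) ^ p ≤ 2 * (|M| - M % 2) := by omega
    have hts := abs_sub_abs_le_abs_sub (M * 2 ^ b : ℝ) (M * 2 ^ b - R (M * 2 ^ b))
    rw [sub_sub_cancel, abs_mul (M : ℝ), abs_of_pos hu] at hts
    have := mul_le_mul_of_nonneg_right (Int.cast_le (R := ℝ) |>.2 hMP) hu.le
    push_cast at this
    linarith
  refine ⟨n, hn, ?_⟩
  rw [hn, ← sub_mul, abs_mul, abs_of_pos hu, ← Int.cast_sub, ← Int.cast_abs] at herr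
  exact_mod_cast le_of_mul_le_mul_right herr hu

theorem Int.abs_add_bounds_of_mul_pos {P a c : ℤ} (ha₁ : P ≤ 2 * |a|) (ha₂ : |a| < P)
    (hc₁ : P ≤ 2 * |c|) (hc₂ : |c| < P) (hac : 0 < a * c) :
    P ≤ |a + c| ∧ |a + c| + 2 ≤ 2 * P := by
  have h : |a + c| = |a| + |c| := abs_add_eq_add_abs_iff a c |>.2 <| by
    rcases mul_pos_iff.1 hac with ⟨ha, hc⟩ | ⟨ha, hc⟩
    exacts [Or.inl ⟨ha.le, hc.le⟩, Or.inr ⟨ha.le, hc.le⟩]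
  omega

theorem Int.abs_bounds_of_abs_sub_le_emod_two {P M n : ℤ} (hP : Even P) (hM₁ : P ≤ |M|)
    (hM₂ : |M| + 2 ≤ 2 * P) (hn : |M - n| ≤ M % 2) :
    P ≤ |n| ∧ |n| < 2 * P ∧ (M - n = 0 ∨ |M - n| = 1) := by
  obtain ⟨Q, rfl⟩ := hP
  grind

theorem Int.mul_pos_of_mul_pos_of_abs_add_sub_le_one {a c n : ℤ} (hac : 0 < a * c)
    (hM : 2 ≤ |a + c|) (hn : |a + c - n| ≤ 1) : 0 < a * n := by
  rcases mul_pos_iff.1 hac with ⟨ha, hc⟩ | ⟨ha, hc⟩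
  · exact mul_pos ha (by grind)
  · exact mul_pos_of_neg_of_neg ha (by grind)

section IntMulTwoZpow

variable (a b c : ℤ) (k : ℕ)

theorem int_mul_two_zpow_mul_pos_iff : 0 < (a : ℝ) * 2 ^ b * (c * 2 ^ b) ↔ 0 < a * c := by
  rw [show (a : ℝ) * 2 ^ b * (c * 2 ^ b) = (a * c : ℤ) * (2 ^ b) ^ 2 by push_cast; ring,
    mul_pos_iff_of_pos_right (by positivity), Int.cast_pos]

theorem two_zpow_add_le_abs_int_mul_iff :
    (2 : ℝ) ^ ((k : ℤ) + b) ≤ |(a : ℝ) * 2 ^ b| ↔ 2 ^ k ≤ |a| := by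
  rw [zpow_add₀ two_ne_zero, zpow_natCast, abs_mul,
    abs_of_pos (zpow_pos two_pos b : (0 : ℝ) < 2 ^ b),
    mul_le_mul_iff_left₀ (zpow_pos two_pos b)]
  exact_mod_cast Iff.rfl

theorem abs_int_mul_lt_two_zpow_add_iff :
    |(a : ℝ) * 2 ^ b| < 2 ^ ((k : ℤ) + b) ↔ |a| < 2 ^ k := by
  rw [zpow_add₀ two_ne_zero, zpow_natCast, abs_mul,
    abs_of_pos (zpow_pos two_pos b : (0 : ℝ) < 2 ^ b),
    mul_lt_mul_iff_left₀ (zpow_pos two_pos b)]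
  exact_mod_cast Iff.rfl

end IntMulTwoZpow

theorem same_sign_equal_exponent_sum_general (p : ℕ)
    (R : ℝ → ℝ) (hR : IsRNE p R) (x y : ℝ) (ex : ℤ)
    (hx : FpVal p ex x) (hy : FpVal p ex y) (hsign : 0 < x * y) :
    R (x + y) ≠ 0 ∧ 0 < x * R (x + y) ∧
      (2 : ℝ) ^ (ex + 1) ≤ |R (x + y)| ∧ |R (x + y)| < (2 : ℝ) ^ (ex + 2) ∧
      ((x + y) - R (x + y) = 0 ∨
        (FpRep p ((x + y) - R (x + y)) ∧
          (2 : ℝ) ^ (ex - ((p : ℤ) - 1)) ≤ |(x + y) - R (x + y)| ∧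
          |(x + y) - R (x + y)| < (2 : ℝ) ^ (ex - ((p : ℤ) - 1) + 1))) := by
  have hp := hx.one_le_prec
  obtain ⟨a, ha₁, ha₂, rfl⟩ := hx
  obtain ⟨c, hc₁, hc₂, rfl⟩ := hy
  set b := ex - ((p : ℤ) - 1)
  have hP : (2 : ℤ) ^ p = 2 * 2 ^ (p - 1) := (mul_pow_sub_one (by omega) 2).symm
  have hac := (int_mul_two_zpow_mul_pos_iff a b c).1 hsign
  obtain ⟨hM₁, hM₂⟩ := Int.abs_add_bounds_of_mul_pos (by omega) ha₂ (by omega) hc₂ hac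
  obtain ⟨n, hn, hMn⟩ := hR.exists_int_mul_zpow_apply b hM₁ hM₂
  obtain ⟨hn₁, hn₂, hd⟩ :=
    Int.abs_bounds_of_abs_sub_le_emod_two ((Int.even_pow' (by omega)).2 even_two) hM₁ hM₂ hMn
  have han := Int.mul_pos_of_mul_pos_of_abs_add_sub_le_one hac (by omega) (hMn.trans (by omega))
  rw [← add_mul, ← Int.cast_add, hn, ← sub_mul, ← Int.cast_sub,
    show ex + 1 = ((p : ℕ) : ℤ) + b by omega,
    show ex + 2 = ((p + 1 : ℕ) : ℤ) + b by push_cast; omega]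
  refine ⟨mul_ne_zero (Int.cast_ne_zero.2 (right_ne_zero_of_mul han.ne'))
      (zpow_ne_zero _ two_ne_zero),
    (int_mul_two_zpow_mul_pos_iff a b n).2 han, (two_zpow_add_le_abs_int_mul_iff _ _ _).2 hn₁,
    (abs_int_mul_lt_two_zpow_add_iff _ _ _).2 (by rwa [pow_succ, mul_comm]), ?_⟩
  rcases hd with hd | hd
  · simp [hd]
  · refine Or.inr ⟨⟨a + c - n, b, by omega, rfl⟩, ?_, ?_⟩
    · simpa [hd] using (two_zpow_add_le_abs_int_mul_iff (a + c - n) b 0).2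
    · simpa [hd, add_comm] using (abs_int_mul_lt_two_zpow_add_iff (a + c - n) b 1).2

/-- Lemma SE-S5: same sign and equal exponents ⟹ the rounded sum s is nonzero
with the same sign as x and exponent e_x + 1, and the rounding error is zero or
a nonzero float with exponent e_x - (p - 1). -/
theorem same_sign_equal_exponent_sum (p : ℕ) (hp : 1 ≤ p)
    (R : ℝ → ℝ) (hR : IsRNE p R) (x y : ℝ) (ex : ℤ)
    (hx : FpVal p ex x) (hy : FpVal p ex y) (hsign : 0 < x * y) :
    R (x + y) ≠ 0 ∧ 0 < x * R (x + y) ∧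
      (2 : ℝ) ^ (ex + 1) ≤ |R (x + y)| ∧ |R (x + y)| < (2 : ℝ) ^ (ex + 2) ∧
      ((x + y) - R (x + y) = 0 ∨
        (FpRep p ((x + y) - R (x + y)) ∧
          (2 : ℝ) ^ (ex - ((p : ℤ) - 1)) ≤ |(x + y) - R (x + y)| ∧
          |(x + y) - R (x + y)| < (2 : ℝ) ^ (ex - ((p : ℤ) - 1) + 1))) :=
  same_sign_equal_exponent_sum_general p R hR x y ex hx hy hsign
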